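/- arXiv:2509.21564 — 2 statements merged into one kernel-verified Lean document; each statement's English description precedes it below -/
import Mathlib

section
/- Let A be an abelian category and σ: S ↪ 1_A a preradical with cokernel σ*: 1_A ↠ S*. Then σ is a radical (i.e., the coproduct (σ:σ) equals σ) if and only if S*σ* = σ*S* : S* → S*S* is an isomorphism. -/
/-!
`σ` is the kernel of `σ*`, and `(σ:σ)` is the kernel of `σ*` followed by `S*σ*`. Since `σ*` is
epi, postcomposing it with a morphism `g` leaves its kernel unchanged exactly when `g` is mono.
Finally `S*σ*` is a whiskered epimorphism, hence epi, so in the abelian category `A ⥤ A` it is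
mono iff it is an isomorphism.
-/

open CategoryTheory CategoryTheory.Limits

universe v u

variable {A : Type u} [Category.{v} A] [Abelian A]

/-- The coproduct `(σ:τ)` of preradicals: `Ker(1_A ⟶ S* ⟶ T*S*)`. -/
noncomputable def preradCoprod (σ τ : Subobject (𝟭 A)) : Subobject (𝟭 A) :=
  kernelSubobject
    (cokernel.π σ.arrow ≫ Functor.whiskerLeft (cokernel σ.arrow) (cokernel.π τ.arrow) :
      𝟭 A ⟶ cokernel σ.arrow ⋙ cokernel τ.arrow)

lemma epi_whiskerLeft {K C D : Type*} [Category K] [Category C] [Category D] [HasPushouts D]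
    (F : K ⥤ C) {G H : C ⥤ D} (α : G ⟶ H) [Epi α] : Epi (Functor.whiskerLeft F α) :=
  have : ∀ X, Epi ((Functor.whiskerLeft F α).app X) := fun _ => inferInstanceAs (Epi (α.app _))
  NatTrans.epi_of_epi_app _

section Abelian

variable {C : Type*} [Category C] [Abelian C]

lemma kernelSubobject_cokernel_π_arrow {X : C} (P : Subobject X) :
    kernelSubobject (cokernel.π P.arrow) = P := by
  refine le_antisymm ?_ (le_kernelSubobject _ _ (cokernel.condition _))
  let hP := Abelian.monoIsKernelOfCokernel _ (cokernelIsCokernel P.arrow)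
  exact Subobject.le_of_comm (hP.lift (KernelFork.ofι _ (kernelSubobject_arrow_comp _)))
    (Fork.IsLimit.lift_ι hP)

lemma kernelSubobject_comp_eq_iff_mono {X Y Z : C} (p : X ⟶ Y) [Epi p] (g : Y ⟶ Z) :
    kernelSubobject (p ≫ g) = kernelSubobject p ↔ Mono g := by
  refine ⟨fun h => Preadditive.mono_of_cancel_zero _ fun u hu => ?_,
    fun _ => kernelSubobject_comp_mono p g⟩
  -- Pull `u` back along the epimorphism `p`; the pulled-back map lies in the kernel of `p ≫ g`.
  have hsnd_pg : pullback.snd u p ≫ p ≫ g = 0 := by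
    rw [← Category.assoc, ← pullback.condition, Category.assoc, hu, comp_zero]
  have hsnd_p : pullback.snd u p ≫ p = 0 :=
    (kernelSubobject_factors_iff p _).1 (h ▸ (kernelSubobject_factors_iff (p ≫ g) _).2 hsnd_pg)
  rw [← cancel_epi (pullback.fst u p), pullback.condition, hsnd_p, comp_zero]

end Abelian

/-- A preradical `σ` is a radical iff `σ*S* : S* ⟶ S*S*` is an isomorphism. -/
theorem prerad_radical_iff_whiskerLeft_cokernel_isIso (σ : Subobject (𝟭 A)) :
    preradCoprod σ σ = σ ↔
      IsIso (Functor.whiskerLeft (cokernel σ.arrow) (cokernel.π σ.arrow)) := by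
  have hepi := epi_whiskerLeft (cokernel σ.arrow) (cokernel.π σ.arrow)
  calc preradCoprod σ σ = σ
      ↔ kernelSubobject (cokernel.π σ.arrow ≫
          Functor.whiskerLeft (cokernel σ.arrow) (cokernel.π σ.arrow)) =
        kernelSubobject (cokernel.π σ.arrow) := by
        rw [preradCoprod, kernelSubobject_cokernel_π_arrow]
    _ ↔ Mono (Functor.whiskerLeft (cokernel σ.arrow) (cokernel.π σ.arrow)) :=
        kernelSubobject_comp_eq_iff_mono _ _
    _ ↔ IsIso (Functor.whiskerLeft (cokernel σ.arrow) (cokernel.π σ.arrow)) :=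
        ⟨fun _ => isIso_of_mono_of_epi _, fun _ => inferInstance⟩
end

section
/- Let A be an abelian category, σ: H → 1_A a natural transformation, and τ := Im(σ) : T ↪ 1_A its image preradical. If the natural transformation Hτ : HT → H is an epimorphism in Fun(A,A), then τ is an idempotent preradical. -/
open CategoryTheory CategoryTheory.Limits

universe v u

variable {A : Type u} [Category.{v} A] [Abelian A]

/-- The product `τ·σ` of preradicals, represented by `σ ∘ τS : TS ⟶ 1`. -/
noncomputable def preradProd (τ σ : Subobject (𝟭 A)) : Subobject (𝟭 A) :=
  imageSubobject
    ((Functor.whiskerLeft (σ : A ⥤ A) τ.arrow ≫ σ.arrow :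
      (σ : A ⥤ A) ⋙ (τ : A ⥤ A) ⟶ 𝟭 A))

/-!
Write `σ = e ≫ τ` with `e : H ⟶ T` epi. Naturality of `e` along `τ_X` gives
`H(τ_X) ≫ e_X = e_{TX} ≫ T(τ_X)`, so `T(τ_X)` is epi. Since `τ_X` is mono, naturality of `τ`
along `τ_X` shows `τ_{TX} = T(τ_X)`; hence `τT` is epi, and the image of `τ ∘ τT` is `τ`.
-/

theorem imageSubobject_comp_eq_mk {C : Type*} [Category C] [HasStrongEpiMonoFactorisations C]
    {X Y Z : C} (e : X ⟶ Y) [StrongEpi e] (m : Y ⟶ Z) [Mono m] :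
    imageSubobject (e ≫ m) = Subobject.mk m :=
  (Subobject.mk_eq_mk_of_comm _ _ (image.isoStrongEpiMono e m rfl) (by simp)).symm

theorem NatTrans.app_obj_eq_map_app {C : Type*} [Category C] {F : C ⥤ C} (α : F ⟶ 𝟭 C) (X : C)
    [Mono (α.app X)] : α.app (F.obj X) = F.map (α.app X) := by
  rw [← cancel_mono (α.app X)]
  exact (α.naturality (α.app X)).symm

theorem NatTrans.epi_map_of_epi_map {C D : Type*} [Category C] [Category D] {F G : C ⥤ D}
    (e : F ⟶ G) {X Y : C} (f : X ⟶ Y) [Epi (e.app Y)] [Epi (F.map f)] : Epi (G.map f) := by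
  have : Epi (e.app X ≫ G.map f) := by
    rw [← e.naturality]
    infer_instance
  exact epi_of_epi (e.app X) _

theorem preradProd_self_eq_of_epi_whiskerLeft (τ : Subobject (𝟭 A))
    [Epi (Functor.whiskerLeft (τ : A ⥤ A) τ.arrow)] : preradProd τ τ = τ := by
  have := strongEpi_of_epi (Functor.whiskerLeft (τ : A ⥤ A) τ.arrow)
  rw [preradProd, imageSubobject_comp_eq_mk, Subobject.mk_arrow]

/-- If `σ : H ⟶ 1_A` is a natural transformation with image preradical `τ`,
and `Hτ : HT ⟶ H` is an epimorphism, then `τ` is idempotent. -/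
theorem prerad_image_idempotent_of_epi (H : A ⥤ A) (σ : H ⟶ 𝟭 A)
    (hepi : Epi (Functor.whiskerRight (imageSubobject σ).arrow H)) :
    preradProd (imageSubobject σ) (imageSubobject σ) = imageSubobject σ := by
  set τ := imageSubobject σ
  have hH (X : A) : Epi (H.map (τ.arrow.app X)) := (NatTrans.epi_iff_epi_app _).mp hepi X
  have he (X : A) : Epi ((factorThruImageSubobject σ).app X) :=
    (NatTrans.epi_iff_epi_app _).mp inferInstance X
  have hτT (X : A) : Epi ((Functor.whiskerLeft (τ : A ⥤ A) τ.arrow).app X) := by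
    rw [Functor.whiskerLeft_app, NatTrans.app_obj_eq_map_app]
    exact NatTrans.epi_map_of_epi_map (factorThruImageSubobject σ) (τ.arrow.app X)
  have := NatTrans.epi_of_epi_app (Functor.whiskerLeft (τ : A ⥤ A) τ.arrow)
  exact preradProd_self_eq_of_epi_whiskerLeft τ
end
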